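/- arXiv:1812.01549 — 2 statements merged into one kernel-verified Lean document; each statement's English description precedes it below -/
import Mathlib

section
/- Let X be a well order on a subset of ℕ and Y a linear order on a subset of ℕ that is not well-founded. Then X*Y is a well order and |X| ≤ |X*Y|, i.e., the order type of X is at most the order type of the Kleene–Brouwer ordering of the double descent tree T(X,Y). -/
/-- A tree on ℕ: a set of finite sequences of naturals closed under initial segments. -/
def IsTree (T : Set (List ℕ)) : Prop :=
  ∀ s ∈ T, ∀ t : List ℕ, t <+: s → t ∈ T

/-- `x : ℕ → ℕ` is a branch of `T`: all of its finite initial segments belong to `T`. -/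
def IsBranch (T : Set (List ℕ)) (x : ℕ → ℕ) : Prop :=
  ∀ n : ℕ, (List.range n).map x ∈ T

/-- `[T]`, the set of branches of `T`. -/
def Branches (T : Set (List ℕ)) : Set (ℕ → ℕ) := {x | IsBranch T x}

/-- The Kleene–Brouwer ordering on finite sequences of naturals: `s <_KB t` iff
`t` is a proper initial segment of `s`, or at the first position where `s` and `t`
differ, the entry of `s` is smaller. -/
def KB (s t : List ℕ) : Prop :=
  (t <+: s ∧ t ≠ s) ∨
    ∃ i, i < s.length ∧ i < t.length ∧ (∀ j, j < i → s.getD j 0 = t.getD j 0) ∧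
      s.getD i 0 < t.getD i 0

/-- `r` is a strict linear order on the set `X`. -/
def IsLinOrdOn {α : Type*} (X : Set α) (r : α → α → Prop) : Prop :=
  (∀ a ∈ X, ∀ b ∈ X, ∀ c ∈ X, r a b → r b c → r a c) ∧
  (∀ a ∈ X, ¬r a a) ∧
  (∀ a ∈ X, ∀ b ∈ X, r a b ∨ a = b ∨ r b a)

/-- `r` is a well order on the set `X`: a strict linear order on `X` that is
well-founded on `X`. -/
def IsWellOrdOn {α : Type*} (X : Set α) (r : α → α → Prop) : Prop :=
  IsLinOrdOn X r ∧ WellFounded (Subrel r X)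

/-- The double descent tree `T(X,Y)` of two linear orders on subsets of ℕ:
finite sequences of (coded) pairs `(m_i, n_i)` with the `m_i` strictly descending
in `X` and the `n_i` strictly descending in `Y`.  Pairs are coded by `Nat.pair`. -/
def DDT (X Y : Set ℕ) (rX rY : ℕ → ℕ → Prop) : Set (List ℕ) :=
  {l | (∀ i, i < l.length → (Nat.unpair (l.getD i 0)).1 ∈ X ∧ (Nat.unpair (l.getD i 0)).2 ∈ Y) ∧
       (∀ i, i + 1 < l.length →
         rX (Nat.unpair (l.getD (i + 1) 0)).1 (Nat.unpair (l.getD i 0)).1 ∧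
         rY (Nat.unpair (l.getD (i + 1) 0)).2 (Nat.unpair (l.getD i 0)).2)}

/-! ### Basic facts about prefixes, `getD` and `KB` -/

lemma getD_of_prefix {s t : List ℕ} (h : t <+: s) {j : ℕ} (hj : j < t.length) :
    t.getD j 0 = s.getD j 0 := by
  rw [List.getD_eq_getElem _ _ hj,
    List.getD_eq_getElem _ _ (lt_of_lt_of_le hj h.length_le)]
  exact h.getElem hj

lemma prefix_of_getD {s t : List ℕ} (hl : t.length ≤ s.length)
    (h : ∀ j < t.length, t.getD j 0 = s.getD j 0) : t <+: s := by
  rw [List.prefix_iff_eq_take]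
  apply List.ext_getElem
  · simp [Nat.min_eq_left hl]
  · intro i h1 h2
    have hi : i < t.length := h1
    rw [List.getElem_take]
    rw [← List.getD_eq_getElem t 0 hi, ← List.getD_eq_getElem s 0 (lt_of_lt_of_le hi hl)]
    exact h i hi

lemma kb_irrefl (s : List ℕ) : ¬ KB s s := by
  rintro (⟨_, h⟩ | ⟨i, _, _, _, h⟩)
  · exact h rfl
  · exact lt_irrefl _ h

lemma kb_trichotomy (s t : List ℕ) : s = t ∨ KB s t ∨ KB t s := by
  classical
  by_cases hst : s <+: t
  · by_cases h : s = t
    · exact Or.inl h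
    · exact Or.inr (Or.inr (Or.inl ⟨hst, h⟩))
  by_cases hts : t <+: s
  · exact Or.inr (Or.inl (Or.inl ⟨hts, fun h => hst (h ▸ List.prefix_refl s)⟩))
  have hD : ∃ i, i < s.length ∧ i < t.length ∧ s.getD i 0 ≠ t.getD i 0 := by
    by_contra hD
    push_neg at hD
    rcases le_total s.length t.length with hl | hl
    · exact hst (prefix_of_getD hl (fun j hj => hD j hj (lt_of_lt_of_le hj hl)))
    · exact hts (prefix_of_getD hl (fun j hj => (hD j (lt_of_lt_of_le hj hl) hj).symm))
  have hmin := Nat.find_spec hD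
  set i0 := Nat.find hD with hi0
  have heq : ∀ j < i0, s.getD j 0 = t.getD j 0 := by
    intro j hj
    by_contra hne
    have : Nat.find hD ≤ j := Nat.find_le ⟨lt_trans hj hmin.1, lt_trans hj hmin.2.1, hne⟩
    omega
  rcases lt_or_gt_of_ne hmin.2.2 with h | h
  · exact Or.inr (Or.inl (Or.inr ⟨i0, hmin.1, hmin.2.1, heq, h⟩))
  · exact Or.inr (Or.inr (Or.inr ⟨i0, hmin.2.1, hmin.1, fun j hj => (heq j hj).symm, h⟩))

lemma kb_trans {s t u : List ℕ} (h1 : KB s t) (h2 : KB t u) : KB s u := by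
  rcases h1 with ⟨hp1, hne1⟩ | ⟨i, hi1, hi2, heq1, hlt1⟩
  · rcases h2 with ⟨hp2, hne2⟩ | ⟨j, hj1, hj2, heq2, hlt2⟩
    · refine Or.inl ⟨hp2.trans hp1, fun h => hne1 ?_⟩
      subst h
      exact (hp1.eq_of_length (le_antisymm hp1.length_le hp2.length_le)).symm ▸ rfl
    · refine Or.inr ⟨j, lt_of_lt_of_le hj1 hp1.length_le, hj2, ?_, ?_⟩
      · intro k hk
        rw [← getD_of_prefix hp1 (lt_trans hk hj1)]
        exact heq2 k hk
      · rw [← getD_of_prefix hp1 hj1]; exact hlt2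
  · rcases h2 with ⟨hp2, hne2⟩ | ⟨j, hj1, hj2, heq2, hlt2⟩
    · by_cases hiu : i < u.length
      · refine Or.inr ⟨i, hi1, hiu, ?_, ?_⟩
        · intro k hk
          rw [heq1 k hk]
          exact (getD_of_prefix hp2 (lt_trans hk hiu)).symm
        · rw [getD_of_prefix hp2 hiu]; exact hlt1
      · push_neg at hiu
        refine Or.inl ⟨prefix_of_getD (le_trans hiu (le_of_lt hi1)) ?_, ?_⟩
        · intro k hk
          rw [getD_of_prefix hp2 hk]
          exact (heq1 k (lt_of_lt_of_le hk hiu)).symm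
        · intro h
          subst h
          exact absurd hi1 (not_lt.mpr hiu)
    · rcases lt_trichotomy i j with h | h | h
      · refine Or.inr ⟨i, hi1, lt_trans h hj2, ?_, ?_⟩
        · intro k hk
          rw [heq1 k hk]; exact heq2 k (lt_trans hk h)
        · rw [← heq2 i h]; exact hlt1
      · subst h
        exact Or.inr ⟨i, hi1, hj2, fun k hk => (heq1 k hk).trans (heq2 k hk),
          lt_trans hlt1 hlt2⟩
      · refine Or.inr ⟨j, lt_trans h hi1, hj2, ?_, ?_⟩
        · intro k hk
          rw [heq1 k (lt_trans hk h)]; exact heq2 k hk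
        · rw [heq1 j h]; exact hlt2

/-! ### Descending sequences from non-well-foundedness -/

lemma exists_descending {α : Type*} {r : α → α → Prop} (h : ¬ WellFounded r) :
    ∃ f : ℕ → α, ∀ n, r (f (n+1)) (f n) := by
  classical
  have h0 : ∃ a, ¬ Acc r a := by
    by_contra h'; push_neg at h'; exact h ⟨h'⟩
  have step : ∀ a, ¬ Acc r a → ∃ b, r b a ∧ ¬ Acc r b := by
    intro a ha
    by_contra hb; push_neg at hb
    exact ha (Acc.intro a fun b hr => hb b hr)
  choose g hg1 hg2 using step
  obtain ⟨a0, ha0⟩ := h0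
  let F : ℕ → {a // ¬ Acc r a} :=
    fun n => Nat.rec ⟨a0, ha0⟩ (fun _ p => ⟨g p.1 p.2, hg2 p.1 p.2⟩) n
  exact ⟨fun n => (F n).1, fun n => hg1 (F n).1 (F n).2⟩

/-! ### The tree property of `DDT` -/

lemma ddt_tree (X Y : Set ℕ) (rX rY : ℕ → ℕ → Prop) : IsTree (DDT X Y rX rY) := by
  intro s hs t hts
  obtain ⟨h1, h2⟩ := hs
  constructor
  · intro i hi
    rw [getD_of_prefix hts hi]
    exact h1 i (lt_of_lt_of_le hi hts.length_le)
  · intro i hi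
    have hl := hts.length_le
    rw [getD_of_prefix hts hi, getD_of_prefix hts (by omega)]
    exact h2 i (by omega)

/-! ### Well-foundedness of `KB` on trees without branches -/

lemma kb_wf {T : Set (List ℕ)} (hT : IsTree T) (hnb : ∀ x : ℕ → ℕ, ¬ IsBranch T x) :
    WellFounded (Subrel KB T) := by
  classical
  by_contra hwf
  obtain ⟨F, hF⟩ := exists_descending hwf
  set f : ℕ → List ℕ := fun n => (F n).1 with hf
  have hfT : ∀ n, f n ∈ T := fun n => (F n).2
  have hKB : ∀ n, KB (f (n+1)) (f n) := hF
  have hchain : ∀ i j, i < j → KB (f j) (f i) := by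
    intro i j hij
    induction j with
    | zero => omega
    | succ m ih =>
      rcases Nat.lt_or_ge i m with h | h
      · exact kb_trans (hKB m) (ih h)
      · have : i = m := by omega
        subst this; exact hKB i
  have main : ∀ n, ∃ N u, u ∈ T ∧ u.length = n ∧
      ∀ i, N ≤ i → u <+: f i ∧ u.length < (f i).length := by
    intro n
    induction n with
    | zero =>
      refine ⟨1, [], hT (f 0) (hfT 0) [] (List.nil_prefix), rfl, ?_⟩
      intro i hi
      refine ⟨List.nil_prefix, ?_⟩
      simp only [List.length_nil]
      have hKB0 : KB (f i) (f 0) := hchain 0 i (by omega)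
      by_contra hlen; push_neg at hlen
      have hnil : f i = [] := List.length_eq_zero_iff.mp (by omega)
      rw [hnil] at hKB0
      rcases hKB0 with ⟨hp, hne⟩ | ⟨j, hj, _, _, _⟩
      · exact hne (List.prefix_nil.mp hp)
      · simp at hj
    | succ n ih =>
      obtain ⟨N, u, huT, hulen, hu⟩ := ih
      set g : ℕ → ℕ := fun i => (f i).getD n 0 with hg
      have hmono : ∀ i, N ≤ i → g (i+1) ≤ g i := by
        intro i hi
        obtain ⟨hp, hl⟩ := hu i hi
        obtain ⟨hp', hl'⟩ := hu (i+1) (by omega)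
        rcases hKB i with ⟨hpp, hne⟩ | ⟨j, hj1, hj2, heq, hlt⟩
        · exact le_of_eq (getD_of_prefix hpp (by omega)).symm
        · rcases lt_trichotomy j n with h | h | h
          · exfalso
            have e1 : (f (i+1)).getD j 0 = u.getD j 0 :=
              (getD_of_prefix hp' (by omega)).symm
            have e2 : (f i).getD j 0 = u.getD j 0 :=
              (getD_of_prefix hp (by omega)).symm
            rw [e1, e2] at hlt; exact lt_irrefl _ hlt
          · subst h; exact le_of_lt hlt
          · exact le_of_eq (heq n h)
      have hmono' : ∀ i, N ≤ i → ∀ j, i ≤ j → g j ≤ g i := by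
        intro i hNi j hij
        induction j with
        | zero =>
          have : i = 0 := by omega
          subst this; exact le_rfl
        | succ m ih2 =>
          rcases Nat.lt_or_ge i (m+1) with h | h
          · exact le_trans (hmono m (by omega)) (ih2 (by omega))
          · have : i = m+1 := by omega
            subst this; exact le_rfl
      have hnset : {m | ∃ i, N ≤ i ∧ g i = m}.Nonempty := ⟨g N, N, le_rfl, rfl⟩
      obtain ⟨M, hNM, hgM⟩ := Nat.sInf_mem hnset
      have hstab : ∀ i, M ≤ i → g i = g M := by
        intro i hMi
        have h1 : g i ≤ g M := hmono' M hNM i hMi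
        have h2 : sInf {m | ∃ i, N ≤ i ∧ g i = m} ≤ g i :=
          Nat.sInf_le ⟨i, by omega, rfl⟩
        omega
      set u' := u ++ [g M] with hu'
      have hu'len : u'.length = n+1 := by simp [hu', hulen]
      have hu'pre : ∀ i, M ≤ i → u' <+: f i := by
        intro i hMi
        obtain ⟨hp, hl⟩ := hu i (le_trans hNM hMi)
        apply prefix_of_getD
        · omega
        · intro j hj
          rw [hu'len] at hj
          rcases Nat.lt_or_ge j n with h | h
          · rw [List.getD_append _ _ _ _ (by omega : j < u.length)]
            exact getD_of_prefix hp (by omega)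
          · have hjn : j = n := by omega
            subst hjn
            rw [List.getD_append_right _ _ _ _ (by omega : u.length ≤ j)]
            have : j - u.length = 0 := by omega
            rw [this]
            simp only [List.getD_cons_zero]
            exact (hstab i hMi).symm
      by_cases hex : ∃ i, M ≤ i ∧ f i = u'
      · obtain ⟨i0, hi0, hfi0⟩ := hex
        refine ⟨i0 + 1, u', hfi0 ▸ hfT i0, hu'len, ?_⟩
        intro i hi
        refine ⟨hu'pre i (by omega), ?_⟩
        have hKBi : KB (f i) (f i0) := hchain i0 i (by omega)
        have hne : f i ≠ u' := by
          intro h; rw [h, hfi0] at hKBi; exact kb_irrefl _ hKBi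
        have hp := hu'pre i (by omega)
        rcases lt_or_eq_of_le hp.length_le with h | h
        · exact h
        · exact absurd (hp.eq_of_length h).symm hne
      · push_neg at hex
        refine ⟨M, u', hT (f M) (hfT M) u' (hu'pre M le_rfl), hu'len, ?_⟩
        intro i hi
        have hp := hu'pre i hi
        refine ⟨hp, ?_⟩
        rcases lt_or_eq_of_le hp.length_le with h | h
        · exact h
        · exact absurd (hp.eq_of_length h).symm (hex i hi)
  choose Nf U hUT hUlen hU using main
  have hcoh : ∀ m n', m ≤ n' → U m <+: U n' := by
    intro m n' hmn
    set i := max (Nf m) (Nf n') with hi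
    have h1 := hU m i (le_max_left _ _)
    have h2 := hU n' i (le_max_right _ _)
    apply prefix_of_getD
    · rw [hUlen m, hUlen n']; exact hmn
    · intro j hj
      rw [hUlen] at hj
      rw [getD_of_prefix h1.1 (by rw [hUlen]; exact hj)]
      rw [getD_of_prefix h2.1 (by rw [hUlen]; omega)]
  set b : ℕ → ℕ := fun k => (U (k+1)).getD k 0 with hb
  have hbU : ∀ n', (List.range n').map b = U n' := by
    intro n'
    apply List.ext_getElem (by simp [hUlen])
    intro j h1 h2
    simp only [List.getElem_map, List.getElem_range]
    have hj : j < n' := by simpa using h1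
    have hpre := hcoh (j+1) n' (by omega)
    show (U (j+1)).getD j 0 = (U n')[j]
    rw [getD_of_prefix hpre (by rw [hUlen]; omega)]
    rw [List.getD_eq_getElem _ _ (by rw [hUlen]; omega)]
  have hbranch : IsBranch T b := fun n' => (hbU n') ▸ hUT n'
  exact hnb b hbranch

section Greedy
variable (X : Set ℕ) (rX : ℕ → ℕ → Prop)

/-- greedy minimal-code descending path from the top of `X` down to `x`. -/
noncomputable def gseq (x : ℕ) : ℕ → ℕ
  | 0 => sInf {z | z ∈ X ∧ (z = x ∨ rX x z)}
  | k+1 => if gseq x k = x then x else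
      sInf {w | (w ∈ X ∧ (w = x ∨ rX x w)) ∧ rX w (gseq x k)}

lemma gseq_zero (x : ℕ) : gseq X rX x 0 = sInf {z | z ∈ X ∧ (z = x ∨ rX x z)} := rfl

lemma gseq_succ (x k : ℕ) : gseq X rX x (k+1) = if gseq X rX x k = x then x else
    sInf {w | (w ∈ X ∧ (w = x ∨ rX x w)) ∧ rX w (gseq X rX x k)} := rfl

variable {X rX}
variable (htrans : ∀ a ∈ X, ∀ b ∈ X, ∀ c ∈ X, rX a b → rX b c → rX a c)
  (hirr : ∀ a ∈ X, ¬rX a a)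

lemma gseq_mem {x : ℕ} (hx : x ∈ X) :
    ∀ k, gseq X rX x k ∈ X ∧ (gseq X rX x k = x ∨ rX x (gseq X rX x k)) := by
  intro k
  induction k with
  | zero =>
    rw [gseq_zero]
    exact Nat.sInf_mem (⟨x, hx, Or.inl rfl⟩ : Set.Nonempty {z | z ∈ X ∧ (z = x ∨ rX x z)})
  | succ m ih =>
    by_cases h : gseq X rX x m = x
    · rw [gseq_succ, if_pos h]
      exact ⟨hx, Or.inl rfl⟩
    · have hne : rX x (gseq X rX x m) := (ih.2).resolve_left h
      have : gseq X rX x (m+1) ∈ {w | (w ∈ X ∧ (w = x ∨ rX x w)) ∧ rX w (gseq X rX x m)} := by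
        rw [gseq_succ, if_neg h]
        exact Nat.sInf_mem ⟨x, ⟨hx, Or.inl rfl⟩, hne⟩
      exact this.1

lemma gseq_step {x : ℕ} (hx : x ∈ X) {k : ℕ} (h : gseq X rX x k ≠ x) :
    rX (gseq X rX x (k+1)) (gseq X rX x k) := by
  have hne : rX x (gseq X rX x k) := ((gseq_mem hx k).2).resolve_left h
  have : gseq X rX x (k+1) ∈ {w | (w ∈ X ∧ (w = x ∨ rX x w)) ∧ rX w (gseq X rX x k)} := by
    rw [gseq_succ, if_neg h]
    exact Nat.sInf_mem ⟨x, ⟨hx, Or.inl rfl⟩, hne⟩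
  exact this.2

lemma gseq_le {x : ℕ} (hx : x ∈ X) : ∀ k, gseq X rX x k ≤ x := by
  intro k
  cases k with
  | zero => exact Nat.sInf_le ⟨hx, Or.inl rfl⟩
  | succ m =>
    by_cases h : gseq X rX x m = x
    · rw [gseq_succ, if_pos h]
    · have hne : rX x (gseq X rX x m) := ((gseq_mem hx m).2).resolve_left h
      rw [gseq_succ, if_neg h]
      exact Nat.sInf_le ⟨⟨hx, Or.inl rfl⟩, hne⟩

include htrans hirr in
lemma gseq_lt {x : ℕ} (hx : x ∈ X) :
    ∀ k, gseq X rX x k ≠ x → gseq X rX x k < gseq X rX x (k+1) := by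
  intro k h
  have hmem := gseq_mem (rX := rX) hx
  have hstep := gseq_step hx h
  have hle : gseq X rX x k ≤ gseq X rX x (k+1) := by
    cases k with
    | zero =>
      rw [gseq_zero]
      exact Nat.sInf_le ⟨(hmem 1).1, (hmem 1).2⟩
    | succ m =>
      have hm : gseq X rX x m ≠ x := by
        intro he
        apply h
        rw [gseq_succ, if_pos he]
      have hsm := gseq_step hx hm
      have hmem2 : gseq X rX x (m+1+1) ∈
          {w | (w ∈ X ∧ (w = x ∨ rX x w)) ∧ rX w (gseq X rX x m)} := by
        refine ⟨⟨(hmem (m+2)).1, (hmem (m+2)).2⟩, ?_⟩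
        exact htrans _ (hmem (m+2)).1 _ (hmem (m+1)).1 _ (hmem m).1 (gseq_step hx h) hsm
      calc gseq X rX x (m+1) = _ := by rw [gseq_succ, if_neg hm]
        _ ≤ gseq X rX x (m+2) := Nat.sInf_le hmem2
  rcases lt_or_eq_of_le hle with h' | h'
  · exact h'
  · exact absurd (h' ▸ hstep) (hirr _ (hmem k).1)

include htrans hirr in
lemma gseq_terminates {x : ℕ} (hx : x ∈ X) : ∃ k, gseq X rX x k = x := by
  by_contra hall
  push_neg at hall
  have key : ∀ k, k ≤ gseq X rX x k := by
    intro k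
    induction k with
    | zero => exact Nat.zero_le _
    | succ m ih => exact Nat.lt_of_le_of_lt ih (gseq_lt htrans hirr hx m (hall m))
  have h1 := key (x+1)
  have h2 := gseq_le (rX := rX) hx (x+1)
  omega

/-- the index at which the greedy path reaches `x`. -/
noncomputable def glen (X : Set ℕ) (rX : ℕ → ℕ → Prop) (x : ℕ) : ℕ :=
  sInf {k | gseq X rX x k = x}

include htrans hirr in
lemma gseq_glen {x : ℕ} (hx : x ∈ X) : gseq X rX x (glen X rX x) = x :=
  Nat.sInf_mem (gseq_terminates htrans hirr hx)

lemma gseq_ne_of_lt_glen {x : ℕ} {k : ℕ} (hk : k < glen X rX x) :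
    gseq X rX x k ≠ x := by
  have : k ∉ {k | gseq X rX x k = x} := Nat.notMem_of_lt_sInf hk
  exact this

end Greedy

/-! ### The embedding map -/

noncomputable def fmap (X : Set ℕ) (rX : ℕ → ℕ → Prop) (ys : ℕ → ℕ) (x : ℕ) : List ℕ :=
  (List.range (glen X rX x + 1)).map (fun k => Nat.pair (gseq X rX x k) (ys k))

lemma fmap_length (X : Set ℕ) (rX : ℕ → ℕ → Prop) (ys : ℕ → ℕ) (x : ℕ) :
    (fmap X rX ys x).length = glen X rX x + 1 := by simp [fmap]

lemma fmap_getD (X : Set ℕ) (rX : ℕ → ℕ → Prop) (ys : ℕ → ℕ) (x : ℕ) {k : ℕ}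
    (hk : k < glen X rX x + 1) :
    (fmap X rX ys x).getD k 0 = Nat.pair (gseq X rX x k) (ys k) := by
  rw [List.getD_eq_getElem _ _ (by rw [fmap_length]; omega)]
  simp [fmap]

section Emb
variable {X : Set ℕ} {rX : ℕ → ℕ → Prop}
variable (htrans : ∀ a ∈ X, ∀ b ∈ X, ∀ c ∈ X, rX a b → rX b c → rX a c)
  (hirr : ∀ a ∈ X, ¬rX a a)

include htrans hirr in
lemma gseq_ne {a b : ℕ} (ha : a ∈ X) (hb : b ∈ X) (hab : rX a b) :
    ∀ k, gseq X rX b k ≠ a := by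
  intro k h
  have hm := gseq_mem (rX := rX) hb k
  rw [h] at hm
  rcases hm.2 with h' | h'
  · subst h'; exact hirr _ ha hab
  · exact hirr _ ha (htrans _ ha _ hb _ ha hab h')

include htrans hirr in
lemma gseq_cmp {a b : ℕ} (ha : a ∈ X) (hb : b ∈ X) (hab : rX a b) :
    ∀ k, k ≤ glen X rX b → (∀ j, j < k → gseq X rX a j = gseq X rX b j) →
      gseq X rX a k ≤ gseq X rX b k := by
  have hsub : ∀ z, z ∈ X ∧ (z = b ∨ rX b z) → z ∈ X ∧ (z = a ∨ rX a z) := by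
    rintro z ⟨hz, h | h⟩
    · subst h; exact ⟨hz, Or.inr hab⟩
    · exact ⟨hz, Or.inr (htrans _ ha _ hb _ hz hab h)⟩
  intro k hk heq
  cases k with
  | zero =>
    have hm := gseq_mem (rX := rX) hb 0
    rw [gseq_zero]
    exact Nat.sInf_le (hsub _ ⟨hm.1, hm.2⟩)
  | succ m =>
    have hme : gseq X rX a m = gseq X rX b m := heq m (Nat.lt_succ_self m)
    have hbm : gseq X rX b m ≠ b := gseq_ne_of_lt_glen (by omega)
    have ham : gseq X rX a m ≠ a := by
      rw [hme]; exact gseq_ne htrans hirr ha hb hab m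
    have hbmem : gseq X rX b (m+1) ∈
        {w | (w ∈ X ∧ (w = b ∨ rX b w)) ∧ rX w (gseq X rX b m)} := by
      rw [gseq_succ, if_neg hbm]
      exact Nat.sInf_mem ⟨b, ⟨hb, Or.inl rfl⟩, ((gseq_mem hb m).2).resolve_left hbm⟩
    have : gseq X rX b (m+1) ∈
        {w | (w ∈ X ∧ (w = a ∨ rX a w)) ∧ rX w (gseq X rX a m)} := by
      refine ⟨hsub _ hbmem.1, ?_⟩
      rw [hme]; exact hbmem.2
    calc gseq X rX a (m+1) = _ := by rw [gseq_succ, if_neg ham]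
      _ ≤ gseq X rX b (m+1) := Nat.sInf_le this

include htrans hirr in
lemma fmap_mono (ys : ℕ → ℕ) {a b : ℕ} (ha : a ∈ X) (hb : b ∈ X) (hab : rX a b) :
    KB (fmap X rX ys a) (fmap X rX ys b) := by
  classical
  have hnea := gseq_ne htrans hirr ha hb hab
  by_cases hall : ∀ j, j ≤ glen X rX b → gseq X rX a j = gseq X rX b j
  · have hlen : glen X rX b < glen X rX a := by
      by_contra h; push_neg at h
      have h1 : gseq X rX a (glen X rX a) = a := gseq_glen htrans hirr ha
      have h2 := hall _ h
      rw [h1] at h2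
      exact hnea _ h2.symm
    refine Or.inl ⟨prefix_of_getD ?_ ?_, ?_⟩
    · rw [fmap_length, fmap_length]; omega
    · intro j hj
      rw [fmap_length] at hj
      rw [fmap_getD _ _ _ _ hj, fmap_getD _ _ _ _ (by omega), hall j (by omega)]
    · intro h
      have := congrArg List.length h
      rw [fmap_length, fmap_length] at this; omega
  · push_neg at hall
    have hD : ∃ j, j ≤ glen X rX b ∧ gseq X rX a j ≠ gseq X rX b j := hall
    have hspec := Nat.find_spec hD
    set i := Nat.find hD with hi
    have heqlt : ∀ j, j < i → gseq X rX a j = gseq X rX b j := by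
      intro j hj; by_contra hne
      have : i ≤ j := Nat.find_le ⟨by omega, hne⟩
      omega
    have hia : i ≤ glen X rX a := by
      by_contra h; push_neg at h
      have he := heqlt _ h
      rw [gseq_glen htrans hirr ha] at he
      exact hnea _ he.symm
    have hlt : gseq X rX a i < gseq X rX b i :=
      lt_of_le_of_ne (gseq_cmp htrans hirr ha hb hab i hspec.1 heqlt) hspec.2
    refine Or.inr ⟨i, ?_, ?_, ?_, ?_⟩
    · rw [fmap_length]; omega
    · rw [fmap_length]; omega
    · intro j hj
      rw [fmap_getD _ _ _ _ (by omega), fmap_getD _ _ _ _ (by omega), heqlt j hj]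
    · rw [fmap_getD _ _ _ _ (by omega), fmap_getD _ _ _ _ (by omega)]
      exact Nat.pair_lt_pair_left _ hlt

omit htrans hirr in
lemma fmap_mem {Y : Set ℕ} {rY : ℕ → ℕ → Prop} (ys : ℕ → ℕ)
    (hYmem : ∀ k, ys k ∈ Y) (hYdesc : ∀ k, rY (ys (k+1)) (ys k))
    {x : ℕ} (hx : x ∈ X) : fmap X rX ys x ∈ DDT X Y rX rY := by
  constructor
  · intro i hi
    rw [fmap_length] at hi
    rw [fmap_getD _ _ _ _ hi, Nat.unpair_pair]
    exact ⟨(gseq_mem hx i).1, hYmem i⟩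
  · intro i hi
    rw [fmap_length] at hi
    rw [fmap_getD _ _ _ _ (by omega), fmap_getD _ _ _ _ (by omega),
      Nat.unpair_pair, Nat.unpair_pair]
    exact ⟨gseq_step hx (gseq_ne_of_lt_glen (by omega)), hYdesc i⟩

end Emb

/-- If `X` is a well order and `Y` a non-well-founded linear order
(on subsets of ℕ), then `X*Y` is a well order and `|X| ≤ |X*Y|`: there is an order
embedding of `X` into the Kleene–Brouwer ordering of the double descent tree `T(X,Y)`. -/
theorem type_le_type_star (X Y : Set ℕ) (rX rY : ℕ → ℕ → Prop)
    (hX : IsWellOrdOn X rX) (hY : IsLinOrdOn Y rY)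
    (hYnwf : ¬WellFounded (Subrel rY Y)) :
    IsWellOrdOn (DDT X Y rX rY) KB ∧
      Nonempty (Subrel rX X ↪r Subrel KB (DDT X Y rX rY)) := by
  obtain ⟨⟨htrans, hirr, htri⟩, hwfX⟩ := hX
  -- no branches of the double descent tree
  have hnb : ∀ b : ℕ → ℕ, ¬ IsBranch (DDT X Y rX rY) b := by
    intro b hbr
    have hgetD : ∀ n k, k < n → ((List.range n).map b).getD k 0 = b k := by
      intro n k hk
      rw [List.getD_eq_getElem _ _ (by simpa using hk)]
      simp
    have hmem : ∀ k, (Nat.unpair (b k)).1 ∈ X := by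
      intro k
      have h := (hbr (k+1)).1 k (by simp)
      rw [hgetD _ _ (by omega)] at h
      exact h.1
    have hdesc : ∀ k, rX (Nat.unpair (b (k+1))).1 (Nat.unpair (b k)).1 := by
      intro k
      have h := (hbr (k+2)).2 k (by simp)
      rw [hgetD _ _ (by omega), hgetD _ _ (by omega)] at h
      exact h.1
    set G : ℕ → X := fun k => ⟨(Nat.unpair (b k)).1, hmem k⟩ with hG
    obtain ⟨m, ⟨k, hk⟩, hmin⟩ := hwfX.has_min (Set.range G) ⟨G 0, 0, rfl⟩
    exact hmin (G (k+1)) ⟨k+1, rfl⟩ (by rw [← hk]; exact hdesc k)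
  constructor
  · refine ⟨⟨fun a _ b _ c _ => kb_trans, fun a _ => kb_irrefl a, fun a _ b _ => ?_⟩,
      kb_wf (ddt_tree X Y rX rY) hnb⟩
    rcases kb_trichotomy a b with h | h | h
    · exact Or.inr (Or.inl h)
    · exact Or.inl h
    · exact Or.inr (Or.inr h)
  · -- descending sequence in Y
    obtain ⟨ys', hys'⟩ := exists_descending hYnwf
    set ys : ℕ → ℕ := fun k => (ys' k).1 with hys
    have hYmem : ∀ k, ys k ∈ Y := fun k => (ys' k).2
    have hYdesc : ∀ k, rY (ys (k+1)) (ys k) := hys'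
    have hmemT : ∀ p : X, fmap X rX ys p.1 ∈ DDT X Y rX rY :=
      fun p => fmap_mem ys hYmem hYdesc p.2
    have mono : ∀ p q : X, rX p.1 q.1 → KB (fmap X rX ys p.1) (fmap X rX ys q.1) :=
      fun p q h => fmap_mono htrans hirr ys p.2 q.2 h
    have hiff : ∀ p q : X, KB (fmap X rX ys p.1) (fmap X rX ys q.1) ↔ rX p.1 q.1 := by
      intro p q
      constructor
      · intro h
        rcases htri p.1 p.2 q.1 q.2 with h' | h' | h'
        · exact h'
        · exfalso; rw [h'] at h; exact kb_irrefl _ h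
        · exact absurd (kb_trans h (mono q p h')) (kb_irrefl _)
      · exact mono p q
    have hinj : Function.Injective
        (fun p : X => (⟨fmap X rX ys p.1, hmemT p⟩ : DDT X Y rX rY)) := by
      intro p q h
      have h' : fmap X rX ys p.1 = fmap X rX ys q.1 := congrArg Subtype.val h
      rcases htri p.1 p.2 q.1 q.2 with h'' | h'' | h''
      · exfalso
        have := mono p q h''
        rw [h'] at this
        exact kb_irrefl _ this
      · exact Subtype.ext h''
      · exfalso
        have := mono q p h''
        rw [h'] at this
        exact kb_irrefl _ this
    exact ⟨⟨⟨fun p => ⟨fmap X rX ys p.1, hmemT p⟩, hinj⟩, fun {p q} => hiff p q⟩⟩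
end

section
/- Let (X_n)_{n∈ℕ} and (Y_n)_{n∈ℕ} be sequences of linear orders on subsets of ℕ such that for every n, at least one of X_n, Y_n is well-founded. Let U = Σ_{n∈ℕ} (ℚ_q*Y_n)*X_n. Then U is a well order, and for every linear order X on a subset of ℕ and every n such that X_n is not well-founded, X*Y_n is a well order with |X*Y_n| < |U|. -/
/-- A (candidate) linear order on a subset of ℕ: a domain together with a
strict order relation. -/
abbrev NatOrd := Set ℕ × (ℕ → ℕ → Prop)

/-- `A` is a linear order on a subset of ℕ. -/
def IsLinN (A : NatOrd) : Prop := IsLinOrdOn A.1 A.2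

/-- `A` is well-founded (on its domain). -/
def WFN (A : NatOrd) : Prop := WellFounded (Subrel A.2 A.1)

/-- `A` is a well order on a subset of ℕ. -/
def IsWON (A : NatOrd) : Prop := IsLinN A ∧ WFN A

/-- A fixed injective coding of finite sequences of naturals into ℕ. -/
def listCode : List ℕ → ℕ := Encodable.encode

/-- `A*B`, regarded as a linear order on a subset of ℕ: the Kleene–Brouwer ordering
of the double descent tree `T(A,B)`, transported to ℕ along the injective coding
`listCode`. -/
def ddStar (A B : NatOrd) : NatOrd :=
  (listCode '' DDT A.1 B.1 A.2 B.2,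
   fun a b => ∃ s ∈ DDT A.1 B.1 A.2 B.2, ∃ t ∈ DDT A.1 B.1 A.2 B.2,
     listCode s = a ∧ listCode t = b ∧ KB s t)

/-- `Σ_{n∈ℕ} L n`: the sum of the sequence of orders `L`, with domain coded into ℕ
via `Nat.pair n a` for `a` in the domain of `L n`, ordered lexicographically. -/
def sigmaOrd (L : ℕ → NatOrd) : NatOrd :=
  ({x | x.unpair.2 ∈ (L x.unpair.1).1},
   fun x y => x.unpair.1 < y.unpair.1 ∨
     (x.unpair.1 = y.unpair.1 ∧ (L x.unpair.1).2 x.unpair.2 y.unpair.2))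

/-- `A + B`: the sum of two orders, every element of `A` preceding every element
of `B`, with domain coded into ℕ. -/
def addOrd (A B : NatOrd) : NatOrd :=
  ({x | (x.unpair.1 = 0 ∧ x.unpair.2 ∈ A.1) ∨ (x.unpair.1 = 1 ∧ x.unpair.2 ∈ B.1)},
   fun x y => x.unpair.1 < y.unpair.1 ∨
     (x.unpair.1 = 0 ∧ y.unpair.1 = 0 ∧ A.2 x.unpair.2 y.unpair.2) ∨
     (x.unpair.1 = 1 ∧ y.unpair.1 = 1 ∧ B.2 x.unpair.2 y.unpair.2))

/-- The linear order `ℚ_q` on ℕ induced by a bijection `q : ℕ → ℚ`. -/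
def ratOrd (q : ℕ → ℚ) : NatOrd := (Set.univ, fun m n => q m < q n)

/-- The well order `U = Σ_{n∈ℕ} (ℚ_q*Y_n)*X_n`. -/
def Uord (q : ℕ → ℚ) (X Y : ℕ → NatOrd) : NatOrd :=
  sigmaOrd fun n => ddStar (ddStar (ratOrd q) (Y n)) (X n)

lemma getD_eq_of_isPrefix {u s : List ℕ} (h : u <+: s) {j : ℕ} (hj : j < u.length) :
    u.getD j 0 = s.getD j 0 := by
  obtain ⟨t, rfl⟩ := h
  rw [List.getD_append _ _ _ _ hj]

lemma isPrefix_of_getD_eq {u s : List ℕ} (hl : u.length ≤ s.length)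
    (h : ∀ j < u.length, u.getD j 0 = s.getD j 0) : u <+: s := by
  rw [List.prefix_iff_eq_take]
  refine List.ext_getElem (by simpa using hl) fun i h1 h2 => ?_
  have := h i h1
  rw [List.getD_eq_getElem _ _ h1, List.getD_eq_getElem _ _ (h1.trans_le hl)] at this
  simpa using this

lemma take_eq_take_of_getD_eq {s t : List ℕ} {i : ℕ} (hs : i ≤ s.length) (ht : i ≤ t.length)
    (h : ∀ j < i, s.getD j 0 = t.getD j 0) : s.take i = t.take i := by
  refine List.IsPrefix.eq_of_length (isPrefix_of_getD_eq (by simp [hs, ht]) fun j hj => ?_)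
    (by simp [hs, ht])
  have hj' : j < i := by simpa [hs] using hj
  rw [getD_eq_of_isPrefix (List.take_prefix _ _) hj,
    getD_eq_of_isPrefix (List.take_prefix _ _) (by simpa [ht] using hj'), h j hj']

namespace KB

lemma irrefl (s : List ℕ) : ¬ KB s s := by
  rintro (⟨-, hne⟩ | ⟨i, -, -, -, hlt⟩)
  · exact hne rfl
  · exact lt_irrefl _ hlt

lemma of_isPrefix {s t : List ℕ} (h : t <+: s) (hne : t ≠ s) : KB s t := Or.inl ⟨h, hne⟩

lemma trans {s t u : List ℕ} (h₁ : KB s t) (h₂ : KB t u) : KB s u := by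
  rcases h₁ with ⟨hts, hne⟩ | ⟨i, his, hit, hagree, hlt⟩
  · rcases h₂ with ⟨hut, -⟩ | ⟨i, hit, hiu, hagree, hlt⟩
    · refine of_isPrefix (hut.trans hts) ?_
      rintro rfl
      exact hne (hts.eq_of_length (le_antisymm hts.length_le hut.length_le))
    · refine Or.inr ⟨i, hit.trans_le hts.length_le, hiu, fun j hj => ?_, ?_⟩
      · rw [← getD_eq_of_isPrefix hts (hj.trans hit)]; exact hagree j hj
      · rw [← getD_eq_of_isPrefix hts hit]; exact hlt
  · rcases h₂ with ⟨hut, -⟩ | ⟨i', hit', hiu', hagree', hlt'⟩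
    · rcases lt_or_ge i u.length with hiu | hiu
      · refine Or.inr ⟨i, his, hiu, fun j hj => ?_, ?_⟩
        · rw [getD_eq_of_isPrefix hut (hj.trans hiu)]; exact hagree j hj
        · rw [getD_eq_of_isPrefix hut hiu]; exact hlt
      · refine of_isPrefix (isPrefix_of_getD_eq (hiu.trans his.le) fun j hj => ?_) ?_
        · rw [getD_eq_of_isPrefix hut hj]; exact (hagree j (hj.trans_le hiu)).symm
        · rintro rfl
          exact lt_irrefl _ (getD_eq_of_isPrefix hut his ▸ hlt)
    · rcases lt_trichotomy i i' with hii | rfl | hii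
      · refine Or.inr ⟨i, his, hii.trans hiu', fun j hj => ?_, ?_⟩
        · rw [hagree j hj]; exact hagree' j (hj.trans hii)
        · rw [← hagree' i hii]; exact hlt
      · exact Or.inr ⟨i, his, hiu', fun j hj => (hagree j hj).trans (hagree' j hj),
          hlt.trans hlt'⟩
      · refine Or.inr ⟨i', hii.trans his, hiu', fun j hj => ?_, ?_⟩
        · rw [hagree j (hj.trans hii)]; exact hagree' j hj
        · rw [hagree i' hii]; exact hlt'

lemma total {s t : List ℕ} (h : s ≠ t) : KB s t ∨ KB t s := by
  classical
  by_cases hd : ∃ j < min s.length t.length, s.getD j 0 ≠ t.getD j 0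
  · have hex : ∃ j, s.getD j 0 ≠ t.getD j 0 := hd.imp fun _ => And.right
    obtain ⟨j₀, hj₀, hne₀⟩ := hd
    have hi : Nat.find hex < min s.length t.length := (Nat.find_min' hex hne₀).trans_lt hj₀
    have hagree : ∀ j < Nat.find hex, s.getD j 0 = t.getD j 0 := fun j hj =>
      not_not.mp (Nat.find_min hex hj)
    rw [lt_min_iff] at hi
    rcases (Nat.find_spec hex).lt_or_gt with hlt | hgt
    · exact Or.inl (Or.inr ⟨_, hi.1, hi.2, hagree, hlt⟩)
    · exact Or.inr (Or.inr ⟨_, hi.2, hi.1, fun j hj => (hagree j hj).symm, hgt⟩)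
  · push Not at hd
    rcases le_total s.length t.length with hl | hl
    · refine Or.inr (of_isPrefix (isPrefix_of_getD_eq hl fun j hj => hd j ?_) h)
      exact lt_min hj (hj.trans_le hl)
    · refine Or.inl (of_isPrefix (isPrefix_of_getD_eq hl fun j hj => (hd j ?_).symm) h.symm)
      exact lt_min (hj.trans_le hl) hj

instance : IsStrictOrder (List ℕ) KB where
  irrefl := irrefl
  trans _ _ _ := trans

instance : Std.Trichotomous KB where
  trichotomous _ _ h₁ h₂ := by_contra fun h => (total h).elim h₁ h₂

lemma iff_append {s t : List ℕ} : KB s t ↔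
    (∃ w ≠ [], s = t ++ w) ∨ ∃ u a b s' t', a < b ∧ s = u ++ a :: s' ∧ t = u ++ b :: t' := by
  constructor
  · rintro (⟨⟨w, rfl⟩, hne⟩ | ⟨i, his, hit, hagree, hlt⟩)
    · exact Or.inl ⟨w, by rintro rfl; simp at hne, rfl⟩
    · rw [List.getD_eq_getElem _ _ his, List.getD_eq_getElem _ _ hit] at hlt
      refine Or.inr ⟨s.take i, _, _, s.drop (i + 1), t.drop (i + 1), hlt, ?_, ?_⟩
      · rw [← List.drop_eq_getElem_cons, List.take_append_drop]
      · rw [take_eq_take_of_getD_eq his.le hit.le hagree, ← List.drop_eq_getElem_cons,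
          List.take_append_drop]
  · rintro (⟨w, hw, rfl⟩ | ⟨u, a, b, s', t', hab, rfl, rfl⟩)
    · exact of_isPrefix (List.prefix_append _ _) (by simpa using hw.symm)
    · refine Or.inr ⟨u.length, by simp, by simp, fun j hj => ?_, by simpa⟩
      rw [List.getD_append _ _ _ _ hj, List.getD_append _ _ _ _ hj]

lemma map_of_append_singleton {F : List ℕ → List ℕ} (G : List ℕ → ℕ → ℕ)
    (hF : ∀ s a, F (s ++ [a]) = F s ++ [G s a]) (hG : ∀ s, StrictMono (G s))
    {s t : List ℕ} (h : KB s t) : KB (F s) (F t) := by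
  have hext : ∀ s w, ∃ W, F (s ++ w) = F s ++ W ∧ W.length = w.length := by
    intro s w
    induction w using List.reverseRecOn with
    | nil => exact ⟨[], by simp, rfl⟩
    | append_singleton w a ih =>
      obtain ⟨W, hW, hlen⟩ := ih
      exact ⟨W ++ [G (s ++ w) a], by rw [← List.append_assoc, hF, hW, List.append_assoc],
        by simp [hlen]⟩
  have hcons : ∀ u a s', ∃ S, F (u ++ a :: s') = F u ++ G u a :: S := fun u a s' => by
    obtain ⟨S, hS, -⟩ := hext (u ++ [a]) s'
    exact ⟨S, by simpa [hF] using hS⟩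
  rw [iff_append] at h ⊢
  rcases h with ⟨w, hw, rfl⟩ | ⟨u, a, b, s', t', hab, rfl, rfl⟩
  · obtain ⟨W, hW, hlen⟩ := hext t w
    exact Or.inl ⟨W, by rintro rfl; exact hw (List.eq_nil_of_length_eq_zero hlen.symm), hW⟩
  · obtain ⟨S, hS⟩ := hcons u a s'
    obtain ⟨S', hS'⟩ := hcons u b t'
    exact Or.inr ⟨F u, _, _, S, S', hG u hab, hS, hS'⟩

end KB

section WellFounded

open Filter

lemma KB.getD_le_getD {σ s t : List ℕ} (h : KB s t) (hs : σ <+: s) (ht : σ <+: t)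
    (hσt : σ.length < t.length) : s.getD σ.length 0 ≤ t.getD σ.length 0 := by
  rcases h with ⟨hts, -⟩ | ⟨i, -, -, hagree, hlt⟩
  · exact (getD_eq_of_isPrefix hts hσt).ge
  · rcases lt_trichotomy i σ.length with hi | rfl | hi
    · rw [← getD_eq_of_isPrefix hs hi, ← getD_eq_of_isPrefix ht hi] at hlt
      exact absurd hlt (lt_irrefl _)
    · exact hlt.le
    · exact (hagree _ hi).le

/-- The entries right after an eventual prefix are eventually nonincreasing, hence eventually
constant. -/
lemma KB.exists_eventually_isPrefix {g : ℕ → List ℕ} (hg : ∀ k, KB (g (k + 1)) (g k)) (n : ℕ) :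
    ∃ σ : List ℕ, σ.length = n ∧ ∀ᶠ k in atTop, σ <+: g k := by
  induction n with
  | zero => exact ⟨[], rfl, .of_forall fun _ => List.nil_prefix⟩
  | succ n ih =>
    obtain ⟨σ, hlen, hσ⟩ := ih
    have hne : ∀ᶠ k in atTop, g k ≠ σ := by
      rw [← Nat.cofinite_eq_atTop]
      exact (RelEmbedding.natGT g hg).injective.tendsto_cofinite.eventually
        (eventually_cofinite_ne σ)
    obtain ⟨K, hK⟩ := eventually_atTop.1 (hσ.and hne)
    have hlong : ∀ k ≥ K, σ.length < (g k).length := fun k hk =>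
      (hK k hk).1.length_le.lt_of_ne fun h => (hK k hk).2 ((hK k hk).1.eq_of_length h).symm
    set a : ℕ → ℕ := fun k => (g (K + k)).getD σ.length 0
    have ha : Antitone a := antitone_nat_of_succ_le fun k =>
      KB.getD_le_getD (hg (K + k)) (hK _ (by omega)).1 (hK _ (by omega)).1 (hlong _ (by omega))
    obtain ⟨m, hm⟩ := WellFoundedLT.antitone_chain_condition ha
    refine ⟨σ ++ [a m], by simp [hlen], eventually_atTop.2 ⟨K + m, fun k hk => ?_⟩⟩
    have hval : (g k).getD σ.length 0 = a m := by
      obtain ⟨d, rfl⟩ := exists_add_of_le hk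
      rw [hm (m + d) (by omega), Nat.add_assoc]
    obtain ⟨r, hr⟩ := (hK k (by omega)).1
    cases r with
    | nil => exact absurd (by simp [← hr]) (hlong k (by omega)).ne'
    | cons v r =>
      rw [← hr] at hval
      exact ⟨r, by simpa [← hval] using hr⟩

/-- A descending sequence would yield a branch made of its eventual prefixes. -/
theorem KB.wellFounded_of_forall_not_isBranch {T : Set (List ℕ)} (hT : IsTree T)
    (hB : ∀ x, ¬ IsBranch T x) : WellFounded (Subrel KB T) := by
  rw [wellFounded_iff_isEmpty_descending_chain]
  refine ⟨fun ⟨f, hf⟩ => ?_⟩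
  choose σ hlen hσ using KB.exists_eventually_isPrefix (g := fun k => (f k).1) hf
  have hmono : ∀ {n m}, n ≤ m → σ n <+: σ m := fun {n m} hnm => by
    obtain ⟨k, hkn, hkm⟩ := ((hσ n).and (hσ m)).exists
    exact List.prefix_of_prefix_length_le hkn hkm (by rw [hlen, hlen]; exact hnm)
  have hbranch : ∀ n, (List.range n).map (fun i => (σ (i + 1)).getD i 0) = σ n := fun n =>
    List.ext_getElem (by simp [hlen]) fun i h₁ h₂ => by
      simp only [List.getElem_map, List.getElem_range]
      rw [getD_eq_of_isPrefix (hmono (by simpa using h₁)) (by simp [hlen]),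
        List.getD_eq_getElem]
  refine hB (fun i => (σ (i + 1)).getD i 0) fun n => ?_
  obtain ⟨k, hk⟩ := (hσ n).exists
  rw [hbranch]
  exact hT _ (f k).2 _ hk

end WellFounded

section DoubleDescentTree

variable {X Y : Set ℕ} {rX rY : ℕ → ℕ → Prop}

lemma isTree_DDT : IsTree (DDT X Y rX rY) := by
  rintro s ⟨hmem, hdesc⟩ t ht
  refine ⟨fun i hi => ?_, fun i hi => ?_⟩
  · rw [getD_eq_of_isPrefix ht hi]
    exact hmem i (hi.trans_le ht.length_le)
  · rw [getD_eq_of_isPrefix ht hi, getD_eq_of_isPrefix ht (by omega)]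
    exact hdesc i (hi.trans_le ht.length_le)

lemma nil_mem_DDT : [] ∈ DDT X Y rX rY :=
  ⟨fun i hi => absurd hi (by simp), fun i hi => absurd hi (by simp)⟩

lemma mem_DDT_iff {l : List ℕ} : l ∈ DDT X Y rX rY ↔
    (∀ e ∈ l, e.unpair.1 ∈ X ∧ e.unpair.2 ∈ Y) ∧
      (l.map (·.unpair.1)).IsChain (flip rX) ∧ (l.map (·.unpair.2)).IsChain (flip rY) := by
  simp only [DDT, Set.mem_ofPred_eq, List.forall_mem_iff_getElem, List.isChain_iff_getElem,
    List.length_map, List.getElem_map, flip, ← forall_and]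
  exact forall_congr' fun i => and_congr
    (forall_congr' fun hi => by rw [List.getD_eq_getElem _ _ hi])
    (forall_congr' fun hi => by
      rw [List.getD_eq_getElem _ _ hi, List.getD_eq_getElem _ _ (by omega)])

lemma descending_of_isBranch_DDT {x : ℕ → ℕ} (hx : IsBranch (DDT X Y rX rY) x) (k : ℕ) :
    ((x k).unpair.1 ∈ X ∧ (x k).unpair.2 ∈ Y) ∧
      rX (x (k + 1)).unpair.1 (x k).unpair.1 ∧ rY (x (k + 1)).unpair.2 (x k).unpair.2 := by
  have hget : ∀ {i n}, i < n → ((List.range n).map x).getD i 0 = x i := fun h => by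
    rw [List.getD_eq_getElem _ _ (by simpa using h)]; simp
  have hmem := (hx (k + 1)).1 k (by simp)
  have hdesc := (hx (k + 2)).2 k (by simp)
  rw [hget (by omega)] at hmem
  rw [hget (by omega), hget (by omega)] at hdesc
  exact ⟨hmem, hdesc⟩

lemma not_isBranch_DDT_of_wellFounded_left (hw : WellFounded (Subrel rX X)) (x : ℕ → ℕ) :
    ¬ IsBranch (DDT X Y rX rY) x := fun hx =>
  (wellFounded_iff_isEmpty_descending_chain.1 hw).false
    ⟨fun k => ⟨_, (descending_of_isBranch_DDT hx k).1.1⟩, fun k =>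
      (descending_of_isBranch_DDT hx k).2.1⟩

lemma not_isBranch_DDT_of_wellFounded_right (hw : WellFounded (Subrel rY Y)) (x : ℕ → ℕ) :
    ¬ IsBranch (DDT X Y rX rY) x := fun hx =>
  (wellFounded_iff_isEmpty_descending_chain.1 hw).false
    ⟨fun k => ⟨_, (descending_of_isBranch_DDT hx k).1.2⟩, fun k =>
      (descending_of_isBranch_DDT hx k).2.2⟩

end DoubleDescentTree

section DDStar

lemma listCode_injective : Function.Injective listCode := Encodable.encode_injective

lemma listCode_append_singleton_lt (l : List ℕ) {a b : ℕ} (h : a < b) :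
    listCode (l ++ [a]) < listCode (l ++ [b]) := by
  induction l with
  | nil => simpa [listCode] using Nat.pair_lt_pair_left 0 h
  | cons e l ih => simpa [listCode] using Nat.pair_lt_pair_right e ih

variable {A B : NatOrd}

lemma ddStar_rel_listCode_iff {s t : List ℕ} (hs : s ∈ DDT A.1 B.1 A.2 B.2)
    (ht : t ∈ DDT A.1 B.1 A.2 B.2) : (ddStar A B).2 (listCode s) (listCode t) ↔ KB s t := by
  refine ⟨?_, fun h => ⟨s, hs, t, ht, rfl, rfl, h⟩⟩
  rintro ⟨s', -, t', -, hs', ht', h⟩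
  rwa [← listCode_injective hs', ← listCode_injective ht']

variable (A B) in
noncomputable def ddStarRelIso :
    Subrel KB (DDT A.1 B.1 A.2 B.2) ≃r Subrel (ddStar A B).2 (ddStar A B).1 where
  toEquiv := Equiv.Set.image listCode _ listCode_injective
  map_rel_iff' {s t} := ddStar_rel_listCode_iff s.2 t.2

variable (A B) in
lemma isLinN_ddStar : IsLinN (ddStar A B) := by
  refine ⟨?_, ?_, ?_⟩
  · rintro _ ⟨s, hs, rfl⟩ _ ⟨t, ht, rfl⟩ _ ⟨u, hu, rfl⟩
    simp only [ddStar_rel_listCode_iff hs ht, ddStar_rel_listCode_iff ht hu,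
      ddStar_rel_listCode_iff hs hu]
    exact KB.trans
  · rintro _ ⟨s, hs, rfl⟩
    rw [ddStar_rel_listCode_iff hs hs]
    exact KB.irrefl s
  · rintro _ ⟨s, hs, rfl⟩ _ ⟨t, ht, rfl⟩
    rw [ddStar_rel_listCode_iff hs ht, ddStar_rel_listCode_iff ht hs]
    exact (trichotomous_of KB s t).imp_right (Or.imp_left (congrArg listCode))

lemma wfn_ddStar_of_forall_not_isBranch (hB : ∀ x, ¬ IsBranch (DDT A.1 B.1 A.2 B.2) x) :
    WFN (ddStar A B) :=
  (ddStarRelIso A B).symm.toRelEmbedding.wellFounded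
    (KB.wellFounded_of_forall_not_isBranch isTree_DDT hB)

lemma wfn_ddStar_of_wfn_left (hA : WFN A) : WFN (ddStar A B) :=
  wfn_ddStar_of_forall_not_isBranch (not_isBranch_DDT_of_wellFounded_left hA)

lemma wfn_ddStar_of_wfn_right (hB : WFN B) : WFN (ddStar A B) :=
  wfn_ddStar_of_forall_not_isBranch (not_isBranch_DDT_of_wellFounded_right hB)

end DDStar

lemma IsWON.isWellOrder {A : NatOrd} (hA : IsWON A) : IsWellOrder _ (Subrel A.2 A.1) where
  trichotomous a b hab hba := by
    rcases hA.1.2.2 a.1 a.2 b.1 b.2 with h | h | h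
    · exact absurd h hab
    · exact Subtype.ext h
    · exact absurd h hba
  wf := hA.2

section SigmaOrd

variable {L : ℕ → NatOrd}

lemma sigmaOrd_rel_pair_iff {n a b : ℕ} :
    (sigmaOrd L).2 (Nat.pair n a) (Nat.pair n b) ↔ (L n).2 a b := by
  simp [sigmaOrd]

lemma pair_mem_sigmaOrd {n a : ℕ} (h : a ∈ (L n).1) : Nat.pair n a ∈ (sigmaOrd L).1 := by
  simpa [sigmaOrd] using h

variable (L) in
def sigmaOrdInclusion (n : ℕ) :
    Subrel (L n).2 (L n).1 ↪r Subrel (sigmaOrd L).2 (sigmaOrd L).1 where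
  toFun a := ⟨Nat.pair n a.1, pair_mem_sigmaOrd a.2⟩
  inj' a b h := Subtype.ext (by simpa using congrArg (fun x => x.1.unpair.2) h)
  map_rel_iff' := sigmaOrd_rel_pair_iff

lemma sigmaOrdInclusion_rel_of_lt {n m c : ℕ} (h : n < m) (a : Subtype (L n).1)
    (hc : Nat.pair m c ∈ (sigmaOrd L).1) :
    Subrel (sigmaOrd L).2 (sigmaOrd L).1 (sigmaOrdInclusion L n a) ⟨Nat.pair m c, hc⟩ :=
  Or.inl (show (Nat.pair n a.1).unpair.1 < (Nat.pair m c).unpair.1 by simpa using h)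

lemma isLinN_sigmaOrd (hL : ∀ n, IsLinN (L n)) : IsLinN (sigmaOrd L) := by
  refine ⟨?_, ?_, ?_⟩
  · rintro a ha b hb c hc (h₁ | ⟨h₁, h₁'⟩) (h₂ | ⟨h₂, h₂'⟩)
    · exact Or.inl (h₁.trans h₂)
    · exact Or.inl (h₂ ▸ h₁)
    · exact Or.inl (h₁ ▸ h₂)
    · refine Or.inr ⟨h₁.trans h₂, ?_⟩
      simp only [sigmaOrd, Set.mem_ofPred_eq, ← h₁, ← h₂] at hb hc h₂' ⊢
      exact (hL _).1 _ ha _ hb _ hc h₁' h₂'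
  · rintro a ha (h | ⟨-, h⟩)
    · exact lt_irrefl _ h
    · exact (hL _).2.1 _ ha h
  · rintro a ha b hb
    rcases lt_trichotomy a.unpair.1 b.unpair.1 with h | h | h
    · exact Or.inl (Or.inl h)
    · have hb' : b.unpair.2 ∈ (L a.unpair.1).1 := h ▸ hb
      rcases (hL _).2.2 _ ha _ hb' with h' | h' | h'
      · exact Or.inl (Or.inr ⟨h, h'⟩)
      · exact Or.inr (Or.inl (by rw [← Nat.pair_unpair a, ← Nat.pair_unpair b, h, h']))
      · exact Or.inr (Or.inr (Or.inr ⟨h.symm, h ▸ h'⟩))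
    · exact Or.inr (Or.inr (Or.inl h))

lemma wfn_sigmaOrd (hL : ∀ n, WFN (L n)) : WFN (sigmaOrd L) := by
  have hlex := WellFounded.psigma_lex (r := (· < ·)) wellFounded_lt
    fun n => Set.wellFoundedOn_iff.1 (hL n)
  refine Subrelation.wf (fun {a b} hab => ?_)
    (InvImage.wf (fun x : (sigmaOrd L).1 => (⟨x.1.unpair.1, x.1.unpair.2⟩ : Σ' _ : ℕ, ℕ)) hlex)
  obtain ⟨a, ha : a.unpair.2 ∈ (L a.unpair.1).1⟩ := a
  obtain ⟨b, hb : b.unpair.2 ∈ (L b.unpair.1).1⟩ := b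
  rcases hab with h | ⟨h, h'⟩
  · exact PSigma.Lex.left _ _ h
  · simp only [InvImage]
    rw [h] at h' ha ⊢
    exact PSigma.Lex.right _ ⟨h', ha, hb⟩

end SigmaOrd

lemma Nat.pair_lt_pair_of_lt {a b c d : ℕ} (hb : b ≤ a) (hd : d ≤ c) (h : a < c) :
    Nat.pair a b < Nat.pair c d :=
  calc Nat.pair a b < (max a b + 1) ^ 2 := Nat.pair_lt_max_add_one_sq a b
    _ ≤ max c d ^ 2 := by rw [max_eq_left hb, max_eq_left hd]; exact Nat.pow_le_pow_left h 2
    _ ≤ Nat.pair c d := (Nat.le_add_right _ _).trans (Nat.max_sq_add_min_le_pair c d)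

def BelowLast (q : ℕ → ℚ) (l : List ℕ) (p : ℕ) : Prop := ∀ e ∈ l.getLast?, q p < q e.unpair.1

lemma infinite_belowLast {q : ℕ → ℚ} (hq : Function.Surjective q) (l : List ℕ) :
    {p | BelowLast q l p}.Infinite := by
  cases h : l.getLast? with
  | none => simpa [BelowLast, h] using Set.infinite_univ
  | some e =>
    simp only [BelowLast, h, Option.mem_some_iff, forall_eq']
    exact (Set.Iio_infinite (q e.unpair.1)).preimage (hq.range_eq ▸ Set.subset_univ _)

/-- Taking the `e`-th admissible code, which is at least `e`, makes this strictly increasing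
in `e`. -/
noncomputable def nextEntry (q : ℕ → ℚ) (l : List ℕ) (e : ℕ) : ℕ :=
  Nat.pair (Nat.nth (BelowLast q l) e) e.unpair.2

lemma nextEntry_strictMono {q : ℕ → ℚ} (hq : Function.Surjective q) (l : List ℕ) :
    StrictMono (nextEntry q l) := fun e e' h => by
  have hnth := Nat.nth_strictMono (infinite_belowLast hq l)
  exact Nat.pair_lt_pair_of_lt ((Nat.unpair_right_le e).trans (hnth.id_le e))
    ((Nat.unpair_right_le e').trans (hnth.id_le e')) (hnth h)

noncomputable def relabel (q : ℕ → ℚ) (s : List ℕ) : List ℕ :=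
  s.foldl (fun l e => l ++ [nextEntry q l e]) []

lemma relabel_append_singleton (q : ℕ → ℚ) (s : List ℕ) (e : ℕ) :
    relabel q (s ++ [e]) = relabel q s ++ [nextEntry q (relabel q s) e] := by
  simp [relabel]

lemma map_snd_relabel (q : ℕ → ℚ) (s : List ℕ) : (relabel q s).map (·.unpair.2) = s.map (·.unpair.2) := by
  induction s using List.reverseRecOn with
  | nil => rfl
  | append_singleton s e ih => simp [relabel_append_singleton, ih, nextEntry]

lemma isChain_map_fst_relabel {q : ℕ → ℚ} (hq : Function.Surjective q) (s : List ℕ) :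
    ((relabel q s).map (·.unpair.1)).IsChain (flip (ratOrd q).2) := by
  induction s using List.reverseRecOn with
  | nil => exact .nil
  | append_singleton s e ih =>
    rw [relabel_append_singleton, List.map_append, List.isChain_append]
    refine ⟨ih, .singleton _, fun a ha b hb => ?_⟩
    rw [List.getLast?_map, Option.mem_map] at ha
    obtain ⟨e', he', rfl⟩ := ha
    simp only [List.map_cons, List.map_nil, List.head?_cons, Option.mem_some_iff] at hb
    subst hb
    simpa [nextEntry, ratOrd, flip] using
      Nat.nth_mem_of_infinite (infinite_belowLast hq _) _ e' he'

lemma relabel_mem_DDT {q : ℕ → ℚ} (hq : Function.Surjective q) {Z Y : NatOrd} {s : List ℕ}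
    (hs : s ∈ DDT Z.1 Y.1 Z.2 Y.2) : relabel q s ∈ DDT (ratOrd q).1 Y.1 (ratOrd q).2 Y.2 := by
  rw [mem_DDT_iff] at hs ⊢
  refine ⟨fun e he => ⟨trivial, ?_⟩, isChain_map_fst_relabel hq s, ?_⟩
  · obtain ⟨e', he', heq⟩ := List.mem_map.1 (map_snd_relabel q s ▸ List.mem_map_of_mem he :
      e.unpair.2 ∈ s.map (·.unpair.2))
    exact heq ▸ (hs.1 e' he').2
  · rw [map_snd_relabel]
    exact hs.2.2

lemma KB.relabel {q : ℕ → ℚ} (hq : Function.Surjective q) {s t : List ℕ} (h : KB s t) :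
    KB (relabel q s) (relabel q t) :=
  KB.map_of_append_singleton _ (relabel_append_singleton q) (fun _ => nextEntry_strictMono hq _) h

section PrefixCodes

variable (x : ℕ → ℕ)

def prefixCodes (s : List ℕ) : List ℕ :=
  (List.range s.length).map fun i => Nat.pair (listCode (s.take (i + 1))) (x i)

@[simp]
lemma length_prefixCodes (s : List ℕ) : (prefixCodes x s).length = s.length := by
  simp [prefixCodes]

lemma prefixCodes_append_singleton (s : List ℕ) (a : ℕ) :
    prefixCodes x (s ++ [a]) =
      prefixCodes x s ++ [Nat.pair (listCode (s ++ [a])) (x s.length)] := by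
  simp only [prefixCodes, List.length_append, List.length_singleton, List.range_succ,
    List.map_append, List.map_cons, List.map_nil]
  congr 1
  · refine List.map_congr_left fun i hi => ?_
    rw [List.take_append_of_le_length (by simpa using hi)]
  · rw [List.take_of_length_le (by simp)]

lemma KB.prefixCodes {s t : List ℕ} (h : KB s t) : KB (prefixCodes x s) (prefixCodes x t) :=
  KB.map_of_append_singleton _ (prefixCodes_append_singleton x)
    (fun s _ _ hab => Nat.pair_lt_pair_left _ (listCode_append_singleton_lt s hab)) h

lemma prefixCodes_mem_DDT {A B X : NatOrd} {s : List ℕ} (hs : s ∈ DDT A.1 B.1 A.2 B.2)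
    (hx : ∀ k, x k ∈ X.1) (hxd : ∀ k, X.2 (x (k + 1)) (x k)) :
    prefixCodes x s ∈ DDT (ddStar A B).1 X.1 (ddStar A B).2 X.2 := by
  have hget : ∀ {i}, i < s.length →
      (prefixCodes x s).getD i 0 = Nat.pair (listCode (s.take (i + 1))) (x i) := fun hi => by
    rw [List.getD_eq_getElem _ _ (by simpa using hi)]
    simp [prefixCodes]
  have htake : ∀ i, s.take i ∈ DDT A.1 B.1 A.2 B.2 := fun i =>
    isTree_DDT s hs _ (List.take_prefix _ _)
  refine ⟨fun i hi => ?_, fun i hi => ?_⟩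
  · rw [length_prefixCodes] at hi
    rw [hget hi, Nat.unpair_pair]
    exact ⟨⟨_, htake _, rfl⟩, hx i⟩
  · rw [length_prefixCodes] at hi
    rw [hget hi, hget (by omega), Nat.unpair_pair, Nat.unpair_pair]
    refine ⟨(ddStar_rel_listCode_iff (htake _) (htake _)).2 (KB.of_isPrefix ?_ ?_), hxd i⟩
    · exact List.take_prefix_take_left (by omega)
    · intro heq
      have := congrArg List.length heq
      simp only [List.length_take] at this
      omega

end PrefixCodes

noncomputable def ddtEmbedding {q : ℕ → ℚ} (hq : Function.Surjective q) (Z Y X : NatOrd)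
    (x : ℕ → ℕ) (hx : ∀ k, x k ∈ X.1) (hxd : ∀ k, X.2 (x (k + 1)) (x k)) :
    Subrel KB (DDT Z.1 Y.1 Z.2 Y.2) ↪r
      Subrel KB (DDT (ddStar (ratOrd q) Y).1 X.1 (ddStar (ratOrd q) Y).2 X.2) :=
  ((Subrel.relEmbedding KB _).trans
    (RelEmbedding.ofMonotone (fun s => prefixCodes x (relabel q s))
      fun _ _ h => KB.prefixCodes x (KB.relabel hq h))).codRestrict _
    fun s => prefixCodes_mem_DDT x (relabel_mem_DDT hq s.2) hx hxd

lemma PrincipalSeg.nonempty_of_forall_rel {α β : Type*} {r : α → α → Prop} {s : β → β → Prop}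
    [IsWellOrder β s] (f : r ↪r s) (b : β) (hb : ∀ a, s (f a) b) : Nonempty (PrincipalSeg r s) :=
  ⟨(f.codRestrict {x | s x b} hb).collapse.transPrincipal (PrincipalSeg.ofElement s b)⟩

lemma isWON_Uord (q : ℕ → ℚ) (X Y : ℕ → NatOrd) (h : ∀ n, WFN (X n) ∨ WFN (Y n)) :
    IsWON (Uord q X Y) :=
  ⟨isLinN_sigmaOrd fun _ => isLinN_ddStar _ _, wfn_sigmaOrd fun n => (h n).elim
    wfn_ddStar_of_wfn_right fun hY => wfn_ddStar_of_wfn_left (wfn_ddStar_of_wfn_right hY)⟩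

theorem Uord_wellOrdered_general (q : ℕ → ℚ) (hq : Function.Bijective q)
    (X Y : ℕ → NatOrd)
    (h : ∀ n, WFN (X n) ∨ WFN (Y n)) :
    IsWON (Uord q X Y) ∧
    ∀ Z : NatOrd, IsLinN Z → ∀ n, ¬WFN (X n) →
      IsWON (ddStar Z (Y n)) ∧
      Nonempty (PrincipalSeg (Subrel (ddStar Z (Y n)).2 (ddStar Z (Y n)).1)
        (Subrel (Uord q X Y).2 (Uord q X Y).1)) := by
  have hU := isWON_Uord q X Y h
  refine ⟨hU, fun Z _ n hXn => ?_⟩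
  have hYn : WFN (Y n) := (h n).resolve_left hXn
  refine ⟨⟨isLinN_ddStar _ _, wfn_ddStar_of_wfn_right hYn⟩, ?_⟩
  obtain ⟨⟨x, hx⟩⟩ := not_isEmpty_iff.1 (mt wellFounded_iff_isEmpty_descending_chain.2 hXn)
  have := hU.isWellOrder
  let L := fun m => ddStar (ddStar (ratOrd q) (Y m)) (X m)
  have hemb : Subrel (ddStar Z (Y n)).2 (ddStar Z (Y n)).1 ↪r Subrel (L n).2 (L n).1 :=
    (ddStarRelIso Z (Y n)).symm.toRelEmbedding.trans <|
      (ddtEmbedding hq.2 Z (Y n) (X n) (fun k => (x k).1) (fun k => (x k).2) hx).trans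
        (ddStarRelIso _ _).toRelEmbedding
  exact PrincipalSeg.nonempty_of_forall_rel (hemb.trans (sigmaOrdInclusion L n)) _
    fun a => sigmaOrdInclusion_rel_of_lt n.lt_succ_self (hemb a)
      (pair_mem_sigmaOrd (L := L) ⟨[], nil_mem_DDT, rfl⟩)

/-- If `(X_n)`, `(Y_n)` are sequences of linear orders on subsets
of ℕ such that for every `n` at least one of `X_n`, `Y_n` is well-founded, then
`U = Σ_n (ℚ_q*Y_n)*X_n` is a well order; and for every linear order `X` on a subset
of ℕ and every `n` with `X_n` not well-founded, `X*Y_n` is a well order with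
`|X*Y_n| < |U|` (there is a principal segment embedding into `U`). -/
theorem Uord_wellOrdered (q : ℕ → ℚ) (hq : Function.Bijective q)
    (X Y : ℕ → NatOrd) (hX : ∀ n, IsLinN (X n)) (hY : ∀ n, IsLinN (Y n))
    (h : ∀ n, WFN (X n) ∨ WFN (Y n)) :
    IsWON (Uord q X Y) ∧
    ∀ Z : NatOrd, IsLinN Z → ∀ n, ¬WFN (X n) →
      IsWON (ddStar Z (Y n)) ∧
      Nonempty (PrincipalSeg (Subrel (ddStar Z (Y n)).2 (ddStar Z (Y n)).1)
        (Subrel (Uord q X Y).2 (Uord q X Y).1)) :=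
  Uord_wellOrdered_general q hq X Y h
end
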